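/- arXiv:1808.00229 — 9 statements merged into one kernel-verified Lean document; each statement's English description precedes it below -/
import Mathlib

section
/- The map V(x1,x2,x3) = (2*x2*x3, 2*x1*x3, (1-x3)^2 + x3^2) maps the 2-simplex into itself, and its only fixed points in the simplex are (1/4, 1/4, 1/2) and (0, 0, 1). -/
/-!
The coordinates of the image sum to `2z(x + y) + (1 - z)² + z² = (z + (1 - z))² = 1` on the
simplex, and they are plainly nonnegative. At a fixed point the third coordinate solves
`(1 - z)² + z² = z`, i.e. `(2z - 1)(z - 1) = 0`. For `z = 1` the relations `x = 2y`, `y = 2x`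
force `x = y = 0`; for `z = 1/2` they say `x = y`, and then `x + y = 1/2`.
-/

lemma sq_one_sub_add_sq_eq_self_iff {z : ℝ} :
    (1 - z) ^ 2 + z ^ 2 = z ↔ z = 1 / 2 ∨ z = 1 := by
  have factor : (1 - z) ^ 2 + z ^ 2 - z = (2 * z - 1) * (z - 1) := by ring
  rw [← sub_eq_zero, factor, mul_eq_zero, sub_eq_zero, sub_eq_zero]
  constructor <;> rintro (h | h) <;> [left; right; left; right] <;> linarith

lemma image_mem_simplex {x y z : ℝ} (hx : 0 ≤ x) (hy : 0 ≤ y) (hz : 0 ≤ z)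
    (hsum : x + y + z = 1) :
    0 ≤ 2 * y * z ∧ 0 ≤ 2 * x * z ∧ 0 ≤ (1 - z) ^ 2 + z ^ 2 ∧
      2 * y * z + 2 * x * z + ((1 - z) ^ 2 + z ^ 2) = 1 := by
  have hxy : x + y = 1 - z := by linarith
  refine ⟨by positivity, by positivity, by positivity, ?_⟩
  calc 2 * y * z + 2 * x * z + ((1 - z) ^ 2 + z ^ 2)
      = 2 * z * (x + y) + (1 - z) ^ 2 + z ^ 2 := by ring
    _ = (z + (1 - z)) ^ 2 := by rw [hxy]; ring
    _ = 1 := by ring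

lemma eq_or_eq_of_image_eq_self {x y z : ℝ} (hsum : x + y + z = 1)
    (hfix : (2 * y * z, 2 * x * z, (1 - z) ^ 2 + z ^ 2) = (x, y, z)) :
    (x, y, z) = (1 / 4, 1 / 4, 1 / 2) ∨ (x, y, z) = (0, 0, 1) := by
  simp only [Prod.mk.injEq] at hfix ⊢
  obtain ⟨hx, hy, hz⟩ := hfix
  rcases sq_one_sub_add_sq_eq_self_iff.mp hz with rfl | rfl
  · left; refine ⟨?_, ?_, rfl⟩ <;> linarith
  · right; refine ⟨?_, ?_, rfl⟩ <;> linarith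

/-- V maps the 2-simplex into itself, and its only fixed points in the simplex
are (1/4,1/4,1/2) and (0,0,1). -/
theorem stmt_1
    (V : ℝ × ℝ × ℝ → ℝ × ℝ × ℝ)
    (hV : ∀ p : ℝ × ℝ × ℝ,
      V p = (2 * p.2.1 * p.2.2, 2 * p.1 * p.2.2, (1 - p.2.2)^2 + p.2.2^2))
    (S : Set (ℝ × ℝ × ℝ))
    (hS : S = {p : ℝ × ℝ × ℝ | 0 ≤ p.1 ∧ 0 ≤ p.2.1 ∧ 0 ≤ p.2.2 ∧ p.1 + p.2.1 + p.2.2 = 1}) :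
    (∀ p ∈ S, V p ∈ S) ∧
    {p ∈ S | V p = p} = {((1/4 : ℝ), (1/4 : ℝ), (1/2 : ℝ)), ((0 : ℝ), (0 : ℝ), (1 : ℝ))} := by
  subst hS
  refine ⟨fun ⟨x, y, z⟩ ⟨hx, hy, hz, hsum⟩ => ?_, ?_⟩
  · rw [hV]
    exact image_mem_simplex hx hy hz hsum
  · ext ⟨x, y, z⟩
    simp only [Set.mem_ofPred_eq, Set.mem_insert_iff, Set.mem_singleton_iff, hV]
    constructor
    · rintro ⟨⟨-, -, -, hsum⟩, hfix⟩
      exact eq_or_eq_of_image_eq_self hsum hfix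
    · rintro (h | h) <;> simp only [Prod.mk.injEq] at h <;> obtain ⟨rfl, rfl, rfl⟩ := h <;>
        norm_num
end

section
/- Let 0 ≤ e < 1/4 and φ(x) = (1-x)^2 + e*x^2. Then the numbers x̄ = (1 + √(1-4e))/(2(1+e)) and x̿ = (1 - √(1-4e))/(2(1+e)) satisfy φ(x̄) = x̿ and φ(x̿) = x̄, and x̄ ≠ x̿; i.e., {x̄, x̿} is a 2-periodic orbit of φ. -/
/-!
Writing φ(x) = 1 - 2x + (1 + e)x² and substituting x = u / (1 + e), one finds
(1 + e) φ(u / (1 + e)) = 1 - u whenever u² - u + e = 0. The two roots u = (1 ± √(1 - 4e)) / 2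
of that quadratic add up to 1, so φ exchanges their rescalings x̄ and x̿; they differ because
1 - 4e > 0.
-/

lemma one_sub_div_sq_add_mul_div_sq_of_sq_sub_add_eq_zero {e u : ℝ} (he : 1 + e ≠ 0)
    (hu : u ^ 2 - u + e = 0) :
    (1 - u / (1 + e)) ^ 2 + e * (u / (1 + e)) ^ 2 = (1 - u) / (1 + e) := by
  field_simp
  linear_combination (1 + e) * hu

lemma half_one_add_sq_sub_add_eq_zero {e s : ℝ} (hs : s ^ 2 = 1 - 4 * e) :
    ((1 + s) / 2) ^ 2 - (1 + s) / 2 + e = 0 := by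
  linear_combination hs / 4

/-- For 0 ≤ e < 1/4, the points x̄ and x̿ form a genuine 2-periodic orbit of φ. -/
theorem stmt_7 (e : ℝ) (he0 : 0 ≤ e) (he1 : e < 1/4)
    (φ : ℝ → ℝ) (hφ : ∀ x, φ x = (1 - x)^2 + e * x^2)
    (xb xbb : ℝ)
    (hxb : xb = (1 + Real.sqrt (1 - 4*e)) / (2 * (1 + e)))
    (hxbb : xbb = (1 - Real.sqrt (1 - 4*e)) / (2 * (1 + e))) :
    φ xb = xbb ∧ φ xbb = xb ∧ xb ≠ xbb := by
  have he : (0 : ℝ) < 1 + e := by linarith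
  have hφ_swap : ∀ s : ℝ, s ^ 2 = 1 - 4 * e →
      φ ((1 + s) / (2 * (1 + e))) = (1 - s) / (2 * (1 + e)) := by
    intro s hs
    rw [hφ, ← div_div, one_sub_div_sq_add_mul_div_sq_of_sq_sub_add_eq_zero he.ne'
      (half_one_add_sq_sub_add_eq_zero hs)]
    field_simp
    ring
  set s := Real.sqrt (1 - 4 * e)
  have hs : s ^ 2 = 1 - 4 * e := Real.sq_sqrt (by linarith)
  have hs_pos : 0 < s := Real.sqrt_pos.mpr (by linarith)
  refine ⟨hxb ▸ hxbb ▸ hφ_swap s hs, ?_, ?_⟩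
  · simpa [hxb, hxbb, ← sub_eq_add_neg] using hφ_swap (-s) (by rw [neg_sq, hs])
  · rw [hxb, hxbb]
    exact ((div_lt_div_iff_of_pos_right (by positivity)).mpr (by linarith)).ne'
end

section
/- Let 1/4 ≤ e < 1 and φ(x) = (1-x)^2 + e*x^2. Then every real solution x of φ(φ(x)) = x satisfies φ(x) = x; i.e., φ has no genuine 2-periodic points. -/
/-!
Every solution of `φ (φ x) = x` either solves `φ x = x` or is a root of the quotient
`(φ (φ x) - x) / (φ x - x)`, which is the quadratic `((1 + e) x - 1/2)² + (e - 1/4)`.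
For `e > 1/4` this quadratic has no real root; for `e = 1/4` its only root is `x = 2/5`,
which is itself a fixed point.
-/

def quadMap (e x : ℝ) : ℝ := (1 - x) ^ 2 + e * x ^ 2

theorem quadMap_quadMap_sub_self (e x : ℝ) :
    quadMap e (quadMap e x) - x =
      (quadMap e x - x) * (((1 + e) * x - 1 / 2) ^ 2 + (e - 1 / 4)) := by
  unfold quadMap
  ring

theorem quadMap_eq_self_of_quadMap_quadMap_eq_self {e x : ℝ} (he : 1 / 4 ≤ e)
    (h : quadMap e (quadMap e x) = x) : quadMap e x = x := by
  have hprod := quadMap_quadMap_sub_self e x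
  rw [h, sub_self, eq_comm] at hprod
  rcases mul_eq_zero.mp hprod with hfix | hquad
  · exact sub_eq_zero.mp hfix
  · have hsq := sq_nonneg ((1 + e) * x - 1 / 2)
    obtain rfl : e = 1 / 4 := by linarith
    obtain rfl : x = 2 / 5 := by nlinarith
    norm_num [quadMap]

theorem stmt_8_general (e : ℝ) (he0 : 1/4 ≤ e)
    (φ : ℝ → ℝ) (hφ : ∀ x, φ x = (1 - x)^2 + e * x^2) :
    ∀ x : ℝ, φ (φ x) = x → φ x = x := by
  obtain rfl : φ = quadMap e := funext hφ
  exact fun _ => quadMap_eq_self_of_quadMap_quadMap_eq_self he0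

/-- For 1/4 ≤ e < 1, every solution of φ(φ(x)) = x is a fixed point of φ. -/
theorem stmt_8 (e : ℝ) (he0 : 1/4 ≤ e) (he1 : e < 1)
    (φ : ℝ → ℝ) (hφ : ∀ x, φ x = (1 - x)^2 + e * x^2) :
    ∀ x : ℝ, φ (φ x) = x → φ x = x :=
  stmt_8_general e he0 φ hφ
end

section
/- Let 1/4 < e < 1, φ(x) = (1-x)^2 + e*x^2, and x3* = (3 - √(5-4e))/(2(1+e)). Then |φ'(x3*)| = |1 - √(5-4e)| < 1; i.e., x3* is an attracting fixed point of φ. -/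
/-! Since φ'(x) = 2(1 + e)x - 2 is affine, φ'(x3*) = 1 - √(5 - 4e), and this lies in (-1, 1)
exactly when 0 < 5 - 4e < 4. -/

theorem hasDerivAt_one_sub_sq_add_mul_sq (e x : ℝ) :
    HasDerivAt (fun y : ℝ => (1 - y) ^ 2 + e * y ^ 2) (-2 * (1 - x) + 2 * e * x) x := by
  have h₁ : HasDerivAt (fun y : ℝ => (1 - y) ^ 2) (2 * (1 - x) * (-1)) x :=
    ((hasDerivAt_id x).const_sub 1).pow 2 |>.congr_deriv (by simp)
  have h₂ : HasDerivAt (fun y : ℝ => e * y ^ 2) (e * (2 * x)) x :=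
    ((hasDerivAt_pow 2 x).const_mul e).congr_deriv (by ring)
  exact (h₁.add h₂).congr_deriv (by ring)

theorem deriv_formula_eq_one_sub {e s x : ℝ} (he : 1 + e ≠ 0)
    (hx : x = (3 - s) / (2 * (1 + e))) :
    -2 * (1 - x) + 2 * e * x = 1 - s := by
  subst hx
  field_simp
  ring

theorem abs_one_sub_sqrt_lt_one {t : ℝ} (h₀ : 0 < t) (h₄ : t < 4) : |1 - √t| < 1 := by
  have hpos : 0 < √t := Real.sqrt_pos.mpr h₀
  have hlt : √t < 2 := (Real.sqrt_lt' two_pos).mpr (by linarith)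
  rw [abs_lt]
  constructor <;> linarith

/-- For 1/4 < e < 1, |φ'(x3*)| = |1 - √(5-4e)| < 1: x3* is attracting. -/
theorem stmt_12 (e : ℝ) (he0 : 1/4 < e) (he1 : e < 1)
    (φ : ℝ → ℝ) (hφ : ∀ x, φ x = (1 - x)^2 + e * x^2)
    (x3s : ℝ) (hx3s : x3s = (3 - Real.sqrt (5 - 4*e)) / (2 * (1 + e))) :
    deriv φ x3s = -2 * (1 - x3s) + 2 * e * x3s ∧
    |deriv φ x3s| = |1 - Real.sqrt (5 - 4*e)| ∧
    |1 - Real.sqrt (5 - 4*e)| < 1 := by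
  obtain rfl : φ = fun x => (1 - x)^2 + e * x^2 := funext hφ
  have hderiv := (hasDerivAt_one_sub_sq_add_mul_sq e x3s).deriv
  have hvalue := deriv_formula_eq_one_sub (by linarith) hx3s
  exact ⟨hderiv, by rw [hderiv, hvalue], abs_one_sub_sqrt_lt_one (by linarith) (by linarith)⟩
end

section
/- Let 0 ≤ e < 1/4, g(x) = φ(φ(x)) where φ(x) = (1-x)^2 + e*x^2, and let x̄ = (1 + √(1-4e))/(2(1+e)). Then |g'(x̄)| < 1; i.e., the 2-periodic point x̄ is attracting for φ^2. -/
/-!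
φ is a quadratic with φ'(x) = 2(1+e)x - 2. Writing s = √(1-4e), the points (1 ± s)/(2(1+e)) are
swapped by φ, and φ' takes the values s - 1 and -(1 + s) there. By the chain rule
(φ ∘ φ)'(x̄) = (s - 1)(-(1 + s)) = 1 - s² = 4e, which lies in [0, 1).
-/

def phi (e x : ℝ) : ℝ := (1 - x) ^ 2 + e * x ^ 2

theorem hasDerivAt_phi (e x : ℝ) : HasDerivAt (phi e) (2 * (1 + e) * x - 2) x := by
  have h := (((hasDerivAt_id x).const_sub 1).pow 2).add ((hasDerivAt_pow 2 x).const_mul e)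
  exact h.congr_deriv (by simp; ring)

section TwoCycle

variable {e s : ℝ} (hs : s ^ 2 = 1 - 4 * e) (he : 1 + e ≠ 0)
include hs he

theorem phi_twoCycle : phi e ((1 + s) / (2 * (1 + e))) = (1 - s) / (2 * (1 + e)) := by
  unfold phi
  field_simp
  linear_combination (1 + e) * hs

theorem hasDerivAt_phi_comp_phi_twoCycle :
    HasDerivAt (phi e ∘ phi e) (4 * e) ((1 + s) / (2 * (1 + e))) := by
  have h := (hasDerivAt_phi e _).comp _ (hasDerivAt_phi e ((1 + s) / (2 * (1 + e))))
  rw [phi_twoCycle hs he] at h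
  refine h.congr_deriv ?_
  field_simp
  linear_combination -hs

end TwoCycle

/-- For 0 ≤ e < 1/4 and g = φ ∘ φ, the 2-periodic point x̄ satisfies |g'(x̄)| < 1. -/
theorem stmt_14 (e : ℝ) (he0 : 0 ≤ e) (he1 : e < 1/4)
    (φ : ℝ → ℝ) (hφ : ∀ x, φ x = (1 - x)^2 + e * x^2)
    (xb : ℝ) (hxb : xb = (1 + Real.sqrt (1 - 4*e)) / (2 * (1 + e))) :
    |deriv (φ ∘ φ) xb| < 1 := by
  obtain rfl : φ = phi e := funext hφ
  have hs : Real.sqrt (1 - 4 * e) ^ 2 = 1 - 4 * e := Real.sq_sqrt (by linarith)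
  rw [hxb, (hasDerivAt_phi_comp_phi_twoCycle hs (by positivity)).deriv,
    abs_of_nonneg (by positivity)]
  linarith
end

section
/- Let e ∈ [0,1), c, d ≥ 0 with c + d + e = 1, and x3* = (3 - √(5-4e))/(2(1+e)). Define x1* = (3x3* - 1)(c + 2d·x3*)/(5 + e - 12·x3*) and x2* = 1 - x1* - x3*. Then (x1*, x2*, x3*) is a fixed point of the map V(x1,x2,x3) = (c·x3^2 + 2x2·x3, d·x3^2 + 2x1·x3, (1-x3)^2 + e·x3^2). -/
/-!
The third coordinate of `V` is fixed exactly when `x₃` is a root of `(1 + e) x² - 3x + 1`, and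
`x₃*` is its smaller root. On the simplex, with `c + d + e = 1`, the first two coordinates are then
both fixed as soon as `x₁ (1 + 2x₃) = 1 - x₃ - d x₃²`; modulo the quadratic and `c + d + e = 1`
this is the paper's formula for `x₁*` with its denominator `5 + e - 12 x₃` cleared. That denominator
vanishes at a root only when `(3x₃ - 1)(2x₃ - 1)(2x₃ + 1) = 0`, i.e. `e ∈ {-1, 1, -11}`.
-/

theorem quadratic_eq_zero_of_eq_sub_sqrt_discrim {a b c x : ℝ} (ha : a ≠ 0)
    (hdisc : 0 ≤ discrim a b c) (hx : x = (-b - √(discrim a b c)) / (2 * a)) :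
    a * (x * x) + b * x + c = 0 :=
  (quadratic_eq_zero_iff ha (Real.mul_self_sqrt hdisc).symm x).2 (Or.inr hx)

section FixedPoint

variable {c d e x₁ x₃ : ℝ}

theorem five_add_sub_twelve_mul_ne_zero (hq : (1 + e) * x₃ ^ 2 - 3 * x₃ + 1 = 0)
    (he₀ : -1 < e) (he₁ : e < 1) : 5 + e - 12 * x₃ ≠ 0 := by
  intro hD
  have hroots : (3 * x₃ - 1) * (2 * x₃ - 1) * (2 * x₃ + 1) = 0 := by
    linear_combination hq - x₃ ^ 2 * hD
  rcases mul_eq_zero.1 hroots with h | h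
  · rcases mul_eq_zero.1 h with h | h <;> linarith
  · linarith

theorem mul_one_add_two_mul_eq (hsum : c + d + e = 1)
    (hq : (1 + e) * x₃ ^ 2 - 3 * x₃ + 1 = 0) (hD : 5 + e - 12 * x₃ ≠ 0)
    (hx₁ : x₁ = (3 * x₃ - 1) * (c + 2 * d * x₃) / (5 + e - 12 * x₃)) :
    x₁ * (1 + 2 * x₃) = 1 - x₃ - d * x₃ ^ 2 := by
  rw [hx₁, div_mul_eq_mul_div, div_eq_iff hD]
  linear_combination (d - 6) * hq + (3 * x₃ - 1) * (2 * x₃ + 1) * hsum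

theorem fixed_point_of_quadratic (hsum : c + d + e = 1)
    (hq : (1 + e) * x₃ ^ 2 - 3 * x₃ + 1 = 0) (hx₁ : x₁ * (1 + 2 * x₃) = 1 - x₃ - d * x₃ ^ 2) :
    (c * x₃ ^ 2 + 2 * (1 - x₁ - x₃) * x₃, d * x₃ ^ 2 + 2 * x₁ * x₃,
      (1 - x₃) ^ 2 + e * x₃ ^ 2) = (x₁, 1 - x₁ - x₃, x₃) := by
  refine Prod.ext ?_ (Prod.ext ?_ ?_)
  · linear_combination -hx₁ - hq + x₃ ^ 2 * hsum
  · linear_combination hx₁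
  · linear_combination hq

end FixedPoint

theorem stmt_15_general (c d e : ℝ) (he0 : 0 ≤ e) (he1 : e < 1)
    (hsum : c + d + e = 1)
    (V : ℝ × ℝ × ℝ → ℝ × ℝ × ℝ)
    (hV : ∀ p : ℝ × ℝ × ℝ,
      V p = (c * p.2.2^2 + 2 * p.2.1 * p.2.2,
             d * p.2.2^2 + 2 * p.1 * p.2.2,
             (1 - p.2.2)^2 + e * p.2.2^2))
    (x3s x1s x2s : ℝ)
    (hx3s : x3s = (3 - Real.sqrt (5 - 4*e)) / (2 * (1 + e)))
    (hx1s : x1s = (3 * x3s - 1) * (c + 2 * d * x3s) / (5 + e - 12 * x3s))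
    (hx2s : x2s = 1 - x1s - x3s) :
    V (x1s, x2s, x3s) = (x1s, x2s, x3s) := by
  have hdisc : discrim (1 + e) (-3) 1 = 5 - 4 * e := by unfold discrim; ring
  have hq : (1 + e) * x3s ^ 2 - 3 * x3s + 1 = 0 := by
    have h := quadratic_eq_zero_of_eq_sub_sqrt_discrim (a := 1 + e) (b := -3) (c := 1) (x := x3s)
      (by linarith) (by rw [hdisc]; linarith) (by rw [hdisc, hx3s]; norm_num)
    linear_combination h
  have hD := five_add_sub_twelve_mul_ne_zero hq (by linarith) he1
  rw [hV, hx2s]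
  exact fixed_point_of_quadratic hsum hq (mul_one_add_two_mul_eq hsum hq hD hx1s)

/-- The explicit point (x1*, x2*, x3*) is a fixed point of
V(x1,x2,x3) = (c x3^2 + 2 x2 x3, d x3^2 + 2 x1 x3, (1-x3)^2 + e x3^2). -/
theorem stmt_15 (c d e : ℝ) (hc : 0 ≤ c) (hd : 0 ≤ d) (he0 : 0 ≤ e) (he1 : e < 1)
    (hsum : c + d + e = 1)
    (V : ℝ × ℝ × ℝ → ℝ × ℝ × ℝ)
    (hV : ∀ p : ℝ × ℝ × ℝ,
      V p = (c * p.2.2^2 + 2 * p.2.1 * p.2.2,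
             d * p.2.2^2 + 2 * p.1 * p.2.2,
             (1 - p.2.2)^2 + e * p.2.2^2))
    (x3s x1s x2s : ℝ)
    (hx3s : x3s = (3 - Real.sqrt (5 - 4*e)) / (2 * (1 + e)))
    (hx1s : x1s = (3 * x3s - 1) * (c + 2 * d * x3s) / (5 + e - 12 * x3s))
    (hx2s : x2s = 1 - x1s - x3s) :
    V (x1s, x2s, x3s) = (x1s, x2s, x3s) :=
  stmt_15_general c d e he0 he1 hsum V hV x3s x1s x2s hx3s hx1s hx2s
end

section
/- Let 0 ≤ e < 1 and x3* = (3 - √(5-4e))/(2(1+e)). Then the two eigenvalues λ± = e·x3* - 1 ± √(1 + 2(e-2)x3* + (4+e^2)(x3*)^2) of the Jacobian satisfy |λ+| < 1 and |λ-| > 1; in particular the expression under the square root is nonnegative. -/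
/-!
Write `m = e x₃* - 1` and `R` for the radicand, so that `λ± = m ± √R`. Both inequalities
follow once `(m + 1)² < R < (1 - m)²`: the left inequality puts `√R` beyond `|m + 1|`, so
`λ₋ < -1 < λ₊`, and the right one (which forces `m < 0`) gives `√R < 1 - m`, i.e. `λ₊ < 1`.
Expanded, these two inequalities read `0 < (1 - 2x)² + 2ex` and `4x(x - 1) + 6ex < 3`,
which hold for `0 ≤ e < 1` since then `0 < x₃* < 1/2`.
-/

namespace Real

theorem abs_add_sqrt_lt_one {m R : ℝ} (h₁ : (m + 1) ^ 2 < R) (h₂ : R < (1 - m) ^ 2) :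
    |m + √R| < 1 := by
  have hm : m < 0 := by nlinarith
  have hlow : -√R < m + 1 := neg_sqrt_lt_of_sq_lt h₁
  have hhigh : √R < 1 - m := (sqrt_lt' (by linarith)).2 h₂
  rw [abs_lt]
  constructor <;> linarith

theorem one_lt_abs_sub_sqrt {m R : ℝ} (h : (m + 1) ^ 2 < R) : 1 < |m - √R| := by
  have hlow : m + 1 < √R := lt_sqrt_of_sq_lt h
  rw [lt_abs]
  right
  linarith

end Real

theorem three_sub_sqrt_div_mem_Ioo {e : ℝ} (he₀ : -1 < e) (he₁ : e < 1) :
    (3 - √(5 - 4 * e)) / (2 * (1 + e)) ∈ Set.Ioo 0 (1 / 2) := by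
  have hden : 0 < 2 * (1 + e) := by linarith
  have hs3 : √(5 - 4 * e) < 3 := (Real.sqrt_lt' (by norm_num)).2 (by linarith)
  have hs : 2 - e < √(5 - 4 * e) := Real.lt_sqrt_of_sq_lt (by nlinarith)
  constructor
  · exact div_pos (by linarith) hden
  · rw [div_lt_iff₀ hden]
    linarith

/-- For 0 ≤ e < 1, the eigenvalues λ± = e x3* - 1 ± √(1 + 2(e-2)x3* + (4+e²)(x3*)²)
satisfy |λ+| < 1 and |λ-| > 1, the radicand being nonnegative. -/
theorem stmt_16 (e : ℝ) (he0 : 0 ≤ e) (he1 : e < 1)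
    (x3s : ℝ) (hx3s : x3s = (3 - Real.sqrt (5 - 4*e)) / (2 * (1 + e))) :
    0 ≤ 1 + 2 * (e - 2) * x3s + (4 + e^2) * x3s^2 ∧
    |e * x3s - 1 + Real.sqrt (1 + 2 * (e - 2) * x3s + (4 + e^2) * x3s^2)| < 1 ∧
    1 < |e * x3s - 1 - Real.sqrt (1 + 2 * (e - 2) * x3s + (4 + e^2) * x3s^2)| := by
  obtain ⟨hx0, hx1⟩ : x3s ∈ Set.Ioo 0 (1 / 2) :=
    hx3s ▸ three_sub_sqrt_div_mem_Ioo (by linarith) he1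
  have hlow : (e * x3s - 1 + 1) ^ 2 < 1 + 2 * (e - 2) * x3s + (4 + e^2) * x3s^2 := by
    nlinarith [mul_nonneg he0 hx0.le]
  have hhigh : 1 + 2 * (e - 2) * x3s + (4 + e^2) * x3s^2 < (1 - (e * x3s - 1)) ^ 2 := by
    nlinarith [mul_le_mul he1.le hx1.le hx0.le zero_le_one]
  exact ⟨(sq_nonneg _).trans hlow.le, Real.abs_add_sqrt_lt_one hlow hhigh,
    Real.one_lt_abs_sub_sqrt hlow⟩
end

section
/- The map φ(x) = (1-x)^2 + e·x^2 with e ∈ [0,1] is topologically conjugate via an affine map h(x) = a·x + b (with a ≠ 0) to the logistic map ξ(x) = μ·x(1-x) with μ = 1 + √(5-4e); that is, there exist real a ≠ 0 and b such that h(φ(x)) = ξ(h(x)) for all real x. -/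
/-!
An affine change of variable `h x = a x + b` carries the quadratic `φ` to a quadratic, and
matching coefficients with `ξ` forces `a = -(1 + e)/μ`, `b = (μ + 2)/(2μ)` and
`μ² - 2μ = 4 - 4e`; the root of that equation is `μ = 1 + √(5 - 4e)`.
-/

theorem affine_conj_quadratic_logistic {K : Type*} [Field K] (h2 : (2 : K) ≠ 0)
    {e μ : K} (hμ0 : μ ≠ 0) (hμ : μ ^ 2 = 2 * μ + 4 - 4 * e) (x : K) :
    -(1 + e) / μ * ((1 - x) ^ 2 + e * x ^ 2) + (μ + 2) / (2 * μ) =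
      μ * (-(1 + e) / μ * x + (μ + 2) / (2 * μ)) *
        (1 - (-(1 + e) / μ * x + (μ + 2) / (2 * μ))) := by
  field_simp
  linear_combination (-1 : K) * hμ

theorem one_add_sqrt_sq_eq {e : ℝ} (he : e ≤ 5 / 4) :
    (1 + √(5 - 4 * e)) ^ 2 = 2 * (1 + √(5 - 4 * e)) + 4 - 4 * e := by
  linear_combination Real.sq_sqrt (by linarith : (0 : ℝ) ≤ 5 - 4 * e)

/-- φ(x) = (1-x)^2 + e x^2 with e ∈ [0,1] is affinely conjugate to the logistic
map ξ(x) = μ x (1-x) with μ = 1 + √(5-4e). -/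
theorem stmt_17 (e : ℝ) (he0 : 0 ≤ e) (he1 : e ≤ 1)
    (φ : ℝ → ℝ) (hφ : ∀ x, φ x = (1 - x)^2 + e * x^2)
    (μ : ℝ) (hμ : μ = 1 + Real.sqrt (5 - 4*e))
    (ξ : ℝ → ℝ) (hξ : ∀ x, ξ x = μ * x * (1 - x)) :
    ∃ a b : ℝ, a ≠ 0 ∧ ∀ x : ℝ, a * φ x + b = ξ (a * x + b) := by
  have hμ_pos : 0 < μ := hμ ▸ by positivity
  have hμ_sq : μ ^ 2 = 2 * μ + 4 - 4 * e := hμ ▸ one_add_sqrt_sq_eq (by linarith)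
  refine ⟨-(1 + e) / μ, (μ + 2) / (2 * μ), ?_, fun x => ?_⟩
  · exact div_ne_zero (by linarith) hμ_pos.ne'
  · rw [hφ, hξ]
    exact affine_conj_quadratic_logistic two_ne_zero hμ_pos.ne' hμ_sq x
end

section
/- For the map V(x1,x2,x3) = ((3/8)x2^2 + (5/8)x3^2 + 2x2x3, x1^2 + 2x1x3, (5/8)x2^2 + (3/8)x3^2 + 2x1x2), the point (1/3, 1/3, 1/3) is a fixed point, and the eigenvalues of its Jacobian (in coordinates (x1,x2) after eliminating x3 = 1 - x1 - x2) are λ = -7/8 ± (1/8)√(13/3)·i, which satisfy |λ| = √(5/6) < 1. -/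
/-!
The fixed point is a direct evaluation. The reduced Jacobian at `(1/3, 1/3)` is
`!![-13/12, -1/6; 2/3, -2/3]`, with trace `-7/4` and determinant `5/6`; since
`trace ^ 2 < 4 * det`, its eigenvalues are the complex conjugate pair
`trace / 2 ± (√(4 * det - trace ^ 2) / 2) i`, whose common modulus is `√det`.
-/

open Complex Polynomial

theorem deriv_eq_of_eq_quadratic {f : ℝ → ℝ} (a b c : ℝ) (hf : ∀ t, f t = a * t ^ 2 + b * t + c)
    (x : ℝ) : deriv f x = 2 * a * x + b := by
  have hderiv : HasDerivAt (fun t : ℝ => a * t ^ 2 + b * t + c) (a * (2 * x ^ 1) + b * 1) x :=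
    (((hasDerivAt_pow 2 x).const_mul a).add ((hasDerivAt_id x).const_mul b)).add_const c
  rw [funext hf, hderiv.deriv]
  ring

theorem Matrix.eval_charpoly_map_ofReal_eq_zero (A : Matrix (Fin 2) (Fin 2) ℝ) {z : ℂ}
    (hre : 2 * z.re = A.trace) (him : 4 * z.im ^ 2 = 4 * A.det - A.trace ^ 2) :
    (A.map ofReal).charpoly.eval z = 0 := by
  have htrace : (A.map ofReal).trace = A.trace := by simp [Matrix.trace_fin_two]
  have hdet : (A.map ofReal).det = A.det := (ofRealHom.map_det A).symm
  rw [Matrix.charpoly_fin_two, htrace, hdet]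
  apply Complex.ext
  · simp only [eval_add, eval_sub, eval_mul, eval_X, eval_C, add_re, sub_re, mul_re,
      ofReal_re, ofReal_im, zero_re, sq]
    linear_combination (2 * z.re - A.trace) / 4 * hre - him / 4
  · simp only [eval_add, eval_sub, eval_mul, eval_X, eval_C, add_im, sub_im, mul_im,
      ofReal_re, ofReal_im, zero_im, sq]
    linear_combination z.im * hre

/-- For the example QSO, (1/3,1/3,1/3) is a fixed point and the eigenvalues of
the Jacobian of the reduced 2D map at (1/3,1/3) are -7/8 ± (1/8)√(13/3) i,
of modulus √(5/6) < 1. -/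
theorem stmt_18
    (V : ℝ × ℝ × ℝ → ℝ × ℝ × ℝ)
    (hV : ∀ p : ℝ × ℝ × ℝ,
      V p = ((3/8) * p.2.1^2 + (5/8) * p.2.2^2 + 2 * p.2.1 * p.2.2,
             p.1^2 + 2 * p.1 * p.2.2,
             (5/8) * p.2.1^2 + (3/8) * p.2.2^2 + 2 * p.1 * p.2.1))
    (F1 F2 : ℝ → ℝ → ℝ)
    (hF1 : ∀ x y, F1 x y = (3/8) * y^2 + (5/8) * (1 - x - y)^2 + 2 * y * (1 - x - y))
    (hF2 : ∀ x y, F2 x y = x^2 + 2 * x * (1 - x - y))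
    (J : Matrix (Fin 2) (Fin 2) ℝ)
    (hJ : J = !![deriv (fun x => F1 x (1/3)) (1/3), deriv (fun y => F1 (1/3) y) (1/3);
                 deriv (fun x => F2 x (1/3)) (1/3), deriv (fun y => F2 (1/3) y) (1/3)])
    (lp lm : ℂ)
    (hlp : lp = -7/8 + (1/8) * (Real.sqrt (13/3) : ℂ) * Complex.I)
    (hlm : lm = -7/8 - (1/8) * (Real.sqrt (13/3) : ℂ) * Complex.I) :
    V ((1/3 : ℝ), (1/3 : ℝ), (1/3 : ℝ)) = ((1/3 : ℝ), (1/3 : ℝ), (1/3 : ℝ)) ∧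
    (J.map (fun r => (r : ℂ))).charpoly.eval lp = 0 ∧
    (J.map (fun r => (r : ℂ))).charpoly.eval lm = 0 ∧
    ‖lp‖ = Real.sqrt (5/6) ∧ ‖lm‖ = Real.sqrt (5/6) ∧
    Real.sqrt (5/6) < 1 := by
  have hJ_eq : J = !![-13/12, -1/6; 2/3, -2/3] := by
    rw [hJ, deriv_eq_of_eq_quadratic (5/8) (-3/2) (55/72) (fun x => by rw [hF1]; ring),
      deriv_eq_of_eq_quadratic (-1) (1/2) (5/18) (fun y => by rw [hF1]; ring),
      deriv_eq_of_eq_quadratic (-1) (4/3) 0 (fun x => by rw [hF2]; ring),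
      deriv_eq_of_eq_quadratic 0 (-2/3) (5/9) (fun y => by rw [hF2]; ring)]
    norm_num
  have heigen : ∀ z : ℂ, z.re = -7/8 → z.im ^ 2 = 13/192 →
      (J.map ofReal).charpoly.eval z = 0 ∧ ‖z‖ = √(5/6) := by
    intro z hre him
    refine ⟨J.eval_charpoly_map_ofReal_eq_zero ?_ ?_, ?_⟩
    · rw [hJ_eq, Matrix.trace_fin_two_of]; linarith
    · rw [hJ_eq, Matrix.trace_fin_two_of, Matrix.det_fin_two_of]; linarith
    · rw [norm_eq_sqrt_sq_add_sq, hre, him]; norm_num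
  obtain ⟨hlp_root, hlp_norm⟩ := heigen lp (by simp [hlp])
    (by simp [hlp, mul_pow, div_pow]; norm_num)
  obtain ⟨hlm_root, hlm_norm⟩ := heigen lm (by simp [hlm])
    (by simp [hlm, mul_pow, div_pow]; norm_num)
  refine ⟨by rw [hV]; norm_num, hlp_root, hlm_root, hlp_norm, hlm_norm, ?_⟩
  rw [Real.sqrt_lt' one_pos]
  norm_num
end
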